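/- Assume d·γ ≤ 2·γ*. There exists c > 0, depending only on ℓ, α, m, d, J, γ, γ*, such that for every λ ∈ ℝ and every solution (u, v, w, z) of the resolvent system with data (f₁, f₂, f₄): |v(0)|² + α·|u''(0)|² ≤ c·(1 + λ²)·‖U‖·‖F‖ + c·‖F‖². -/

import Mathlib

open MeasureTheory ComplexConjugate

/-- A solution `(λ, u, v, w, z)` (with `w = v 0`, `z = v1 0`) of the resolvent system of the
hybrid Euler–Bernoulli beam with tip body, with data `(f₁, f₂, f₄)`. The fields `u1,…,u4`
(resp. `v1, v2`, `f1d, f1dd`) are the successive derivatives of `u` (resp. `v`, `f1`)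
on `[0,ℓ]`. -/
structure ResolventSol (ℓ α m d J γ γs : ℝ) where
  lam : ℝ
  u : ℝ → ℂ
  u1 : ℝ → ℂ
  u2 : ℝ → ℂ
  u3 : ℝ → ℂ
  u4 : ℝ → ℂ
  v : ℝ → ℂ
  v1 : ℝ → ℂ
  v2 : ℝ → ℂ
  f1 : ℝ → ℂ
  f1d : ℝ → ℂ
  f1dd : ℝ → ℂ
  f2 : ℝ → ℂ
  f41 : ℂ
  f42 : ℂ
  hu1 : ∀ x ∈ Set.Icc (0:ℝ) ℓ, HasDerivWithinAt u (u1 x) (Set.Icc 0 ℓ) x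
  hu2 : ∀ x ∈ Set.Icc (0:ℝ) ℓ, HasDerivWithinAt u1 (u2 x) (Set.Icc 0 ℓ) x
  hu3 : ∀ x ∈ Set.Icc (0:ℝ) ℓ, HasDerivWithinAt u2 (u3 x) (Set.Icc 0 ℓ) x
  hu4 : ∀ x ∈ Set.Icc (0:ℝ) ℓ, HasDerivWithinAt u3 (u4 x) (Set.Icc 0 ℓ) x
  hu4c : ContinuousOn u4 (Set.Icc 0 ℓ)
  hv1 : ∀ x ∈ Set.Icc (0:ℝ) ℓ, HasDerivWithinAt v (v1 x) (Set.Icc 0 ℓ) x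
  hv2 : ∀ x ∈ Set.Icc (0:ℝ) ℓ, HasDerivWithinAt v1 (v2 x) (Set.Icc 0 ℓ) x
  hv2c : ContinuousOn v2 (Set.Icc 0 ℓ)
  hf11 : ∀ x ∈ Set.Icc (0:ℝ) ℓ, HasDerivWithinAt f1 (f1d x) (Set.Icc 0 ℓ) x
  hf12 : ∀ x ∈ Set.Icc (0:ℝ) ℓ, HasDerivWithinAt f1d (f1dd x) (Set.Icc 0 ℓ) x
  hf1c : ContinuousOn f1dd (Set.Icc 0 ℓ)
  hf2c : ContinuousOn f2 (Set.Icc 0 ℓ)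
  res1 : ∀ x ∈ Set.Icc (0:ℝ) ℓ, Complex.I * (lam : ℂ) * u x - v x = f1 x
  res2 : ∀ x ∈ Set.Icc (0:ℝ) ℓ, Complex.I * (lam : ℂ) * v x + (α : ℂ) * u4 x = f2 x
  res3 : Complex.I * (lam : ℂ) * ((m : ℂ) * v 0 + (m : ℂ) * (d : ℂ) * v1 0) +
      (γ : ℂ) * v 0 + (α : ℂ) * u3 0 = (m : ℂ) * f41 + (m : ℂ) * (d : ℂ) * f42
  res4 : Complex.I * (lam : ℂ) * ((m : ℂ) * (d : ℂ) * v 0 +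
        ((J : ℂ) + (m : ℂ) * (d : ℂ) ^ 2) * v1 0) +
      (d : ℂ) * (γ : ℂ) * v 0 + (d : ℂ) * (γs : ℂ) * v1 0 - (α : ℂ) * u2 0 =
      (m : ℂ) * (d : ℂ) * f41 + ((J : ℂ) + (m : ℂ) * (d : ℂ) ^ 2) * f42
  bcu : u ℓ = 0
  bcu1 : u1 ℓ = 0
  bcv : v ℓ = 0
  bcv1 : v1 ℓ = 0

variable {ℓ α m d J γ γs : ℝ}

/-- The phase-space norm `‖U‖` of a resolvent solution. -/
noncomputable def normU (R : ResolventSol ℓ α m d J γ γs) : ℝ :=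
  Real.sqrt ((∫ x in (0:ℝ)..ℓ, (‖R.v x‖ ^ 2 + α * ‖R.u2 x‖ ^ 2)) +
    m * ‖R.v 0‖ ^ 2 + 2 * m * d * (R.v 0 * conj (R.v1 0)).re +
    (J + m * d ^ 2) * ‖R.v1 0‖ ^ 2)

/-- The phase-space norm `‖F‖` of the data of a resolvent solution. -/
noncomputable def normF (R : ResolventSol ℓ α m d J γ γs) : ℝ :=
  Real.sqrt ((∫ x in (0:ℝ)..ℓ, (‖R.f2 x‖ ^ 2 + α * ‖R.f1dd x‖ ^ 2)) +
    m * ‖R.f41‖ ^ 2 + 2 * m * d * (R.f41 * conj R.f42).re +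
    (J + m * d ^ 2) * ‖R.f42‖ ^ 2)

/-!
Testing the resolvent equations against `U` and integrating by parts twice in the beam, the
boundary terms at `x = 0` cancel against those of the tip equations, leaving the dissipation
identity `γ|w|² + dγ Re(w z̄) + dγ*|z|² = Re⟨U, F⟩ ≤ ‖U‖‖F‖`. When `dγ ≤ 2γ*` the dissipation
form is coercive, so `|w|²` and `|z|²` are `O(‖U‖‖F‖)`. The second tip equation expresses
`αu''(0)` through `λw, λz, w, z` and the tip data `f₄`, which is `O(‖F‖)` because the tip
energy equals `m|f₄¹ + d f₄²|² + J|f₄²|²`.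
-/

theorem le_sqrt_mul_sqrt_of_forall_quadratic_nonneg {a b c : ℝ}
    (h : ∀ t : ℝ, 0 ≤ a + 2 * b * t + c * t ^ 2) : b ≤ √a * √c := by
  have hdisc : discrim c (2 * b) a ≤ 0 := discrim_le_zero fun t => by linarith [h t]
  have ha : 0 ≤ a := by simpa using h 0
  calc b ≤ |b| := le_abs_self b
    _ ≤ √(a * c) := Real.abs_le_sqrt (by rw [discrim] at hdisc; linarith)
    _ = √a * √c := Real.sqrt_mul ha c

theorem intervalIntegral_quadratic_nonneg {ℓ : ℝ} (hℓ : 0 ≤ ℓ) {p q r : ℝ → ℝ}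
    (hp : IntervalIntegrable p volume 0 ℓ) (hq : IntervalIntegrable q volume 0 ℓ)
    (hr : IntervalIntegrable r volume 0 ℓ)
    (h : ∀ x ∈ Set.Icc 0 ℓ, ∀ t : ℝ, 0 ≤ p x + 2 * q x * t + r x * t ^ 2) (t : ℝ) :
    0 ≤ (∫ x in 0..ℓ, p x) + 2 * (∫ x in 0..ℓ, q x) * t + (∫ x in 0..ℓ, r x) * t ^ 2 := by
  have hq' := (hq.const_mul 2).mul_const t
  have := intervalIntegral.integral_nonneg (μ := volume) hℓ fun x hx => h x hx t
  rwa [intervalIntegral.integral_add (hp.add hq') (hr.mul_const _),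
    intervalIntegral.integral_add hp hq', intervalIntegral.integral_mul_const,
    intervalIntegral.integral_const_mul, intervalIntegral.integral_mul_const] at this

theorem sq_norm_sum_le_card_mul {ι E : Type*} [SeminormedAddCommGroup E] (s : Finset ι)
    (f : ι → E) : ‖∑ i ∈ s, f i‖ ^ 2 ≤ s.card * ∑ i ∈ s, ‖f i‖ ^ 2 :=
  (pow_le_pow_left₀ (norm_nonneg _) (norm_sum_le s f) 2).trans sq_sum_le_card_mul_sum_sq

theorem beam_energy_quadratic_nonneg (hα : 0 ≤ α) (a b e f : ℂ) (t : ℝ) :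
    0 ≤ (‖a‖ ^ 2 + α * ‖e‖ ^ 2) + 2 * ((a * conj b).re + α * (e * conj f).re) * t
      + (‖b‖ ^ 2 + α * ‖f‖ ^ 2) * t ^ 2 := by
  simp only [Complex.sq_norm, Complex.normSq_apply, Complex.mul_re, Complex.conj_re,
    Complex.conj_im]
  nlinarith [sq_nonneg (a.re + t * b.re), sq_nonneg (a.im + t * b.im),
    mul_nonneg hα (sq_nonneg (e.re + t * f.re)), mul_nonneg hα (sq_nonneg (e.im + t * f.im))]

theorem tip_energy_quadratic_nonneg (hm : 0 ≤ m) (hJ : 0 ≤ J) (w z g₁ g₂ : ℂ) (t : ℝ) :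
    0 ≤ (m * ‖w‖ ^ 2 + 2 * m * d * (w * conj z).re + (J + m * d ^ 2) * ‖z‖ ^ 2)
      + 2 * (m * (w * conj g₁).re + m * d * ((w * conj g₂).re + (z * conj g₁).re)
        + (J + m * d ^ 2) * (z * conj g₂).re) * t
      + (m * ‖g₁‖ ^ 2 + 2 * m * d * (g₁ * conj g₂).re + (J + m * d ^ 2) * ‖g₂‖ ^ 2) * t ^ 2 := by
  simp only [Complex.sq_norm, Complex.normSq_apply, Complex.mul_re, Complex.conj_re,
    Complex.conj_im]
  nlinarith [mul_nonneg hm (sq_nonneg (w.re + t * g₁.re + d * (z.re + t * g₂.re))),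
    mul_nonneg hm (sq_nonneg (w.im + t * g₁.im + d * (z.im + t * g₂.im))),
    mul_nonneg hJ (sq_nonneg (z.re + t * g₂.re)), mul_nonneg hJ (sq_nonneg (z.im + t * g₂.im))]

theorem tip_energy_eq (w z : ℂ) :
    m * ‖w‖ ^ 2 + 2 * m * d * (w * conj z).re + (J + m * d ^ 2) * ‖z‖ ^ 2
      = m * ‖w + d * z‖ ^ 2 + J * ‖z‖ ^ 2 := by
  simp only [Complex.sq_norm, Complex.normSq_apply, Complex.mul_re, Complex.mul_im, Complex.add_re,
    Complex.add_im, Complex.conj_re, Complex.conj_im, Complex.ofReal_re, Complex.ofReal_im]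
  ring

theorem norm_sq_add_norm_sq_le_of_tip_energy_le (hm : 0 < m) (hJ : 0 < J) {w z : ℂ} {N : ℝ}
    (h : m * ‖w‖ ^ 2 + 2 * m * d * (w * conj z).re + (J + m * d ^ 2) * ‖z‖ ^ 2 ≤ N) :
    ‖w‖ ^ 2 + ‖z‖ ^ 2 ≤ (2 / m + (2 * d ^ 2 + 1) / J) * N := by
  rw [tip_energy_eq] at h
  have hz : ‖z‖ ^ 2 ≤ N / J := by
    rw [le_div_iff₀ hJ]; nlinarith [mul_nonneg hm.le (sq_nonneg ‖w + d * z‖)]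
  have hwz : ‖w + d * z‖ ^ 2 ≤ N / m := by
    rw [le_div_iff₀ hm]; nlinarith [mul_nonneg hJ.le (sq_nonneg ‖z‖)]
  have hw : ‖w‖ ≤ ‖w + d * z‖ + |d| * ‖z‖ := by
    simpa [norm_mul] using norm_sub_le (w + d * z) (d * z)
  calc ‖w‖ ^ 2 + ‖z‖ ^ 2 ≤ 2 * ‖w + d * z‖ ^ 2 + (2 * d ^ 2 + 1) * ‖z‖ ^ 2 := by
        nlinarith [sq_abs d, sq_nonneg (‖w + d * z‖ - |d| * ‖z‖), norm_nonneg w]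
    _ ≤ 2 * (N / m) + (2 * d ^ 2 + 1) * (N / J) := by gcongr
    _ = (2 / m + (2 * d ^ 2 + 1) / J) * N := by ring

theorem norm_sq_add_norm_sq_le_of_dissipation_le (hγ : 0 < γ) (hd : 0 < d)
    (hyp : d * γ ≤ 2 * γs) {w z : ℂ} {P : ℝ}
    (h : γ * ‖w‖ ^ 2 + d * γ * (w * conj z).re + d * γs * ‖z‖ ^ 2 ≤ P) :
    ‖w‖ ^ 2 + ‖z‖ ^ 2 ≤ (2 / γ + 2 / (d * γs)) * P := by
  have hγs : 0 < d * γs := mul_pos hd (by nlinarith [mul_pos hd hγ])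
  have hre : -(‖w‖ * ‖z‖) ≤ (w * conj z).re := by
    simpa [norm_mul] using (abs_le.1 (Complex.abs_re_le_norm (w * conj z))).1
  replace hre := mul_le_mul_of_nonneg_left hre (mul_pos hd hγ).le
  have hgap := mul_nonneg (mul_nonneg hd.le (sub_nonneg.2 hyp)) (sq_nonneg ‖z‖)
  have hw : ‖w‖ ^ 2 ≤ 2 / γ * P := by
    rw [div_mul_eq_mul_div, le_div_iff₀ hγ]
    nlinarith [mul_nonneg hγ.le (sq_nonneg (‖w‖ - d * ‖z‖))]
  have hz : ‖z‖ ^ 2 ≤ 2 / (d * γs) * P := by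
    rw [div_mul_eq_mul_div, le_div_iff₀ hγs]
    nlinarith [mul_nonneg hγ.le (sq_nonneg (2 * ‖w‖ - d * ‖z‖))]
  linarith

theorem sq_mul_sq_norm_le_of_tip_eq {lam : ℝ} {w z a f₁ f₂ : ℂ}
    (h : Complex.I * lam * (m * d * w + (J + m * d ^ 2) * z) + d * γ * w + d * γs * z - α * a
      = m * d * f₁ + (J + m * d ^ 2) * f₂) :
    α ^ 2 * ‖a‖ ^ 2 ≤ 6 * ((m * d) ^ 2 + (J + m * d ^ 2) ^ 2 + (d * γ) ^ 2 + (d * γs) ^ 2)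
      * ((1 + lam ^ 2) * (‖w‖ ^ 2 + ‖z‖ ^ 2) + (‖f₁‖ ^ 2 + ‖f₂‖ ^ 2)) := by
  set S := (m * d) ^ 2 + (J + m * d ^ 2) ^ 2 + (d * γ) ^ 2 + (d * γs) ^ 2
  set x : Fin 6 → ℂ := ![Complex.I * lam * ((m * d : ℝ) * w),
    Complex.I * lam * ((J + m * d ^ 2 : ℝ) * z), (d * γ : ℝ) * w, (d * γs : ℝ) * z,
    -((m * d : ℝ) * f₁), -((J + m * d ^ 2 : ℝ) * f₂)]
  have ha : (α : ℂ) * a = ∑ i, x i := by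
    simp only [x, Fin.sum_univ_six, Matrix.cons_val_zero, Matrix.cons_val_one, Matrix.cons_val]
    push_cast
    linear_combination -h
  have := sq_norm_sum_le_card_mul Finset.univ x
  rw [← ha, Finset.card_univ, Fintype.card_fin] at this
  simp only [x, Fin.sum_univ_six, Matrix.cons_val_zero, Matrix.cons_val_one, Matrix.cons_val,
    norm_neg, norm_mul, Complex.norm_I, Complex.norm_real, Real.norm_eq_abs, mul_pow, sq_abs,
    one_mul, Nat.cast_succ, Nat.cast_zero] at this
  have h₁ : (m * d) ^ 2 ≤ S := by simp only [S]; nlinarith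
  have h₂ : (J + m * d ^ 2) ^ 2 ≤ S := by simp only [S]; nlinarith
  have h₃ : (d * γ) ^ 2 ≤ S := by simp only [S]; nlinarith
  have h₄ : (d * γs) ^ 2 ≤ S := by simp only [S]; nlinarith
  have hlw := mul_nonneg (sq_nonneg lam) (sq_nonneg ‖w‖)
  have hlz := mul_nonneg (sq_nonneg lam) (sq_nonneg ‖z‖)
  linarith [mul_le_mul_of_nonneg_right h₁ hlw, mul_le_mul_of_nonneg_right h₂ hlz,
    mul_le_mul_of_nonneg_right h₃ (sq_nonneg ‖w‖), mul_le_mul_of_nonneg_right h₄ (sq_nonneg ‖z‖),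
    mul_le_mul_of_nonneg_right h₁ (sq_nonneg ‖f₁‖), mul_le_mul_of_nonneg_right h₂ (sq_nonneg ‖f₂‖)]

theorem exists_boundary_estimate_of_tip_eq (hα : 0 < α) (hm : 0 < m) (hd : 0 < d) (hJ : 0 < J)
    (hγ : 0 < γ) (hyp : d * γ ≤ 2 * γs) :
    ∃ c > 0, ∀ (lam : ℝ) (w z a f₁ f₂ : ℂ) (P N : ℝ),
      γ * ‖w‖ ^ 2 + d * γ * (w * conj z).re + d * γs * ‖z‖ ^ 2 ≤ P →
      m * ‖f₁‖ ^ 2 + 2 * m * d * (f₁ * conj f₂).re + (J + m * d ^ 2) * ‖f₂‖ ^ 2 ≤ N →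
      Complex.I * lam * (m * d * w + (J + m * d ^ 2) * z) + d * γ * w + d * γs * z - α * a
        = m * d * f₁ + (J + m * d ^ 2) * f₂ →
      ‖w‖ ^ 2 + α * ‖a‖ ^ 2 ≤ c * ((1 + lam ^ 2) * P + N) := by
  have hγs : 0 < γs := by nlinarith [mul_pos hd hγ]
  set CP := 2 / γ + 2 / (d * γs)
  set CN := 2 / m + (2 * d ^ 2 + 1) / J
  set S := (m * d) ^ 2 + (J + m * d ^ 2) ^ 2 + (d * γ) ^ 2 + (d * γs) ^ 2
  have hCP : 0 < CP := by positivity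
  have hCN : 0 < CN := by positivity
  refine ⟨CP + 6 * S * (CP + CN) / α, by positivity,
    fun lam w z a f₁ f₂ P N hP hN h4 => ?_⟩
  have hwz := norm_sq_add_norm_sq_le_of_dissipation_le hγ hd hyp hP
  have hf := norm_sq_add_norm_sq_le_of_tip_energy_le hm hJ hN
  have hP0 : 0 ≤ P := nonneg_of_mul_nonneg_right ((by positivity : (0:ℝ) ≤ _).trans hwz) hCP
  have hN0 : 0 ≤ N := nonneg_of_mul_nonneg_right ((by positivity : (0:ℝ) ≤ _).trans hf) hCN
  have ha : α * ‖a‖ ^ 2 ≤ 6 * S * ((1 + lam ^ 2) * (CP * P) + CN * N) / α := by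
    rw [le_div_iff₀ hα]
    calc α * ‖a‖ ^ 2 * α = α ^ 2 * ‖a‖ ^ 2 := by ring
      _ ≤ _ := sq_mul_sq_norm_le_of_tip_eq h4
      _ ≤ 6 * S * ((1 + lam ^ 2) * (CP * P) + CN * N) := by gcongr
  have hlP := mul_nonneg (sq_nonneg lam) hP0
  have hQ₁ : CP * P ≤ CP * ((1 + lam ^ 2) * P + N) := by gcongr; linarith
  have hQ₂ : (1 + lam ^ 2) * (CP * P) + CN * N ≤ (CP + CN) * ((1 + lam ^ 2) * P + N) := by
    nlinarith [mul_nonneg hCP.le hN0, mul_nonneg hCN.le hP0, mul_nonneg hCN.le hlP]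
  calc ‖w‖ ^ 2 + α * ‖a‖ ^ 2
      ≤ CP * P + 6 * S * ((1 + lam ^ 2) * (CP * P) + CN * N) / α :=
        add_le_add ((le_add_of_nonneg_right (sq_nonneg ‖z‖)).trans hwz) ha
    _ ≤ CP * ((1 + lam ^ 2) * P + N) + 6 * S * ((CP + CN) * ((1 + lam ^ 2) * P + N)) / α := by
        gcongr
    _ = (CP + 6 * S * (CP + CN) / α) * ((1 + lam ^ 2) * P + N) := by ring

namespace ResolventSol

variable (R : ResolventSol ℓ α m d J γ γs)

theorem continuousOn_v : ContinuousOn R.v (Set.Icc 0 ℓ) :=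
  fun x hx => (R.hv1 x hx).continuousWithinAt

theorem continuousOn_u2 : ContinuousOn R.u2 (Set.Icc 0 ℓ) :=
  fun x hx => (R.hu3 x hx).continuousWithinAt

theorem f1d_eq (hℓ : 0 < ℓ) {x : ℝ} (hx : x ∈ Set.Icc 0 ℓ) :
    R.f1d x = Complex.I * R.lam * R.u1 x - R.v1 x :=
  (uniqueDiffOn_Icc hℓ x hx).eq_deriv _ (R.hf11 x hx)
    ((((R.hu1 x hx).const_mul _).sub (R.hv1 x hx)).congr (fun y hy => (R.res1 y hy).symm)
      (R.res1 x hx).symm)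

theorem v2_eq (hℓ : 0 < ℓ) {x : ℝ} (hx : x ∈ Set.Icc 0 ℓ) :
    R.v2 x = Complex.I * R.lam * R.u2 x - R.f1dd x := by
  have := (uniqueDiffOn_Icc hℓ x hx).eq_deriv _ (R.hf12 x hx)
    ((((R.hu2 x hx).const_mul _).sub (R.hv2 x hx)).congr (fun y hy => R.f1d_eq hℓ hy)
      (R.f1d_eq hℓ hx))
  linear_combination this

/-- The real part of the phase-space inner product `⟨U, F⟩`. -/
noncomputable def pairing : ℝ :=
  (∫ x in (0:ℝ)..ℓ, ((R.v x * conj (R.f2 x)).re + α * (R.u2 x * conj (R.f1dd x)).re)) +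
    (m * (R.v 0 * conj R.f41).re + m * d * ((R.v 0 * conj R.f42).re + (R.v1 0 * conj R.f41).re)
      + (J + m * d ^ 2) * (R.v1 0 * conj R.f42).re)

theorem re_beam_integrand_eq (hℓ : 0 < ℓ) {x : ℝ} (hx : x ∈ Set.Icc 0 ℓ) :
    (α * (R.u4 x * conj (R.v x)) - α * (R.u2 x * conj (R.v2 x))).re
      = (R.v x * conj (R.f2 x)).re + α * (R.u2 x * conj (R.f1dd x)).re := by
  have hu4 : (α : ℂ) * R.u4 x = R.f2 x - Complex.I * R.lam * R.v x := by
    linear_combination R.res2 x hx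
  rw [← mul_assoc, hu4, R.v2_eq hℓ hx]
  -- the remaining terms `iλ|v|²` and `iλα|u''|²` are purely imaginary
  simp only [Complex.mul_re, Complex.mul_im, Complex.sub_re, Complex.sub_im, map_sub, map_mul,
    Complex.conj_I, Complex.conj_ofReal, Complex.conj_re, Complex.conj_im, Complex.ofReal_re,
    Complex.ofReal_im, Complex.I_re, Complex.I_im, Complex.neg_re, Complex.neg_im]
  ring

theorem integral_beam_pairing_eq_boundary (hℓ : 0 < ℓ) :
    ∫ x in (0:ℝ)..ℓ, ((R.v x * conj (R.f2 x)).re + α * (R.u2 x * conj (R.f1dd x)).re)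
      = (α * (R.u2 0 * conj (R.v1 0)) - α * (R.u3 0 * conj (R.v 0))).re := by
  set H : ℝ → ℂ := fun x => α * (R.u3 x * conj (R.v x)) - α * (R.u2 x * conj (R.v1 x))
  set H' : ℝ → ℂ := fun x => α * (R.u4 x * conj (R.v x)) - α * (R.u2 x * conj (R.v2 x))
  have hH : ∀ x ∈ Set.Icc 0 ℓ, HasDerivWithinAt H (H' x) (Set.Icc 0 ℓ) x := by
    intro x hx
    have hA : HasDerivWithinAt (fun y => R.u3 y * conj (R.v y))
        (R.u4 x * conj (R.v x) + R.u3 x * conj (R.v1 x)) (Set.Icc 0 ℓ) x :=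
      (R.hu4 x hx).mul (R.hv1 x hx).star
    have hB : HasDerivWithinAt (fun y => R.u2 y * conj (R.v1 y))
        (R.u3 x * conj (R.v1 x) + R.u2 x * conj (R.v2 x)) (Set.Icc 0 ℓ) x :=
      (R.hu3 x hx).mul (R.hv2 x hx).star
    refine ((hA.const_mul (α : ℂ)).sub (hB.const_mul (α : ℂ))).congr_deriv ?_
    ring
  have hH'int : IntervalIntegrable H' volume 0 ℓ :=
    ((continuousOn_const.mul (R.hu4c.mul R.continuousOn_v.star)).sub
      (continuousOn_const.mul (R.continuousOn_u2.mul R.hv2c.star))).intervalIntegrable_of_Icc hℓ.le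
  have hFTC : ∫ x in (0:ℝ)..ℓ, H' x = H ℓ - H 0 :=
    intervalIntegral.integral_eq_sub_of_hasDerivAt_of_le hℓ.le
      (fun x hx => (hH x hx).continuousWithinAt)
      (fun x hx => (hH x (Set.Ioo_subset_Icc_self hx)).hasDerivAt (Icc_mem_nhds hx.1 hx.2))
      hH'int
  have hHℓ : H ℓ = 0 := by simp [H, R.bcv, R.bcv1]
  calc ∫ x in (0:ℝ)..ℓ, ((R.v x * conj (R.f2 x)).re + α * (R.u2 x * conj (R.f1dd x)).re)
      = ∫ x in (0:ℝ)..ℓ, (H' x).re := intervalIntegral.integral_congr fun x hx =>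
        (R.re_beam_integrand_eq hℓ (Set.uIcc_of_le hℓ.le ▸ hx)).symm
    _ = (∫ x in (0:ℝ)..ℓ, H' x).re := intervalIntegral.intervalIntegral_re hH'int
    _ = _ := by rw [hFTC, hHℓ, zero_sub, neg_sub]

theorem tip_energy_balance :
    γ * ‖R.v 0‖ ^ 2 + d * γ * (R.v 0 * conj (R.v1 0)).re + d * γs * ‖R.v1 0‖ ^ 2
      + (α * (R.u3 0 * conj (R.v 0)) - α * (R.u2 0 * conj (R.v1 0))).re
      = m * (R.v 0 * conj R.f41).re + m * d * ((R.v 0 * conj R.f42).re + (R.v1 0 * conj R.f41).re)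
        + (J + m * d ^ 2) * (R.v1 0 * conj R.f42).re := by
  have h := congrArg Complex.re
    (congrArg₂ (fun p q => conj (R.v 0) * p + conj (R.v1 0) * q) R.res3 R.res4)
  simp only [Complex.sq_norm, Complex.normSq_apply, Complex.add_re, Complex.add_im, Complex.mul_re,
    Complex.mul_im, Complex.sub_re, Complex.sub_im, Complex.conj_re, Complex.conj_im,
    ← Complex.ofReal_pow, Complex.ofReal_re, Complex.ofReal_im, Complex.I_re,
    Complex.I_im] at h ⊢
  linear_combination h

theorem dissipation_eq_pairing (hℓ : 0 < ℓ) :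
    γ * ‖R.v 0‖ ^ 2 + d * γ * (R.v 0 * conj (R.v1 0)).re + d * γs * ‖R.v1 0‖ ^ 2 = R.pairing := by
  rw [pairing, R.integral_beam_pairing_eq_boundary hℓ, ← R.tip_energy_balance, Complex.sub_re,
    Complex.sub_re]
  ring

theorem pairing_le_normU_mul_normF (hℓ : 0 ≤ ℓ) (hα : 0 ≤ α) (hm : 0 ≤ m) (hJ : 0 ≤ J) :
    R.pairing ≤ normU R * normF R := by
  have hv := R.continuousOn_v
  have hu2 := R.continuousOn_u2
  have hf2 := R.hf2c
  have hf1dd := R.hf1c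
  refine le_sqrt_mul_sqrt_of_forall_quadratic_nonneg fun t => ?_
  have hbeam := intervalIntegral_quadratic_nonneg hℓ
    (ContinuousOn.intervalIntegrable_of_Icc hℓ (by fun_prop))
    (ContinuousOn.intervalIntegrable_of_Icc hℓ (by fun_prop))
    (ContinuousOn.intervalIntegrable_of_Icc hℓ (by fun_prop))
    (fun x _ t => beam_energy_quadratic_nonneg hα (R.v x) (R.f2 x) (R.u2 x) (R.f1dd x) t) t
  have htip := tip_energy_quadratic_nonneg (d := d) hm hJ (R.v 0) (R.v1 0) R.f41 R.f42 t
  rw [pairing]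
  linarith

theorem tip_energy_data_le_normF_sq (hℓ : 0 ≤ ℓ) (hα : 0 ≤ α) (hm : 0 ≤ m) (hJ : 0 ≤ J) :
    m * ‖R.f41‖ ^ 2 + 2 * m * d * (R.f41 * conj R.f42).re + (J + m * d ^ 2) * ‖R.f42‖ ^ 2
      ≤ normF R ^ 2 := by
  have hint : 0 ≤ ∫ x in (0:ℝ)..ℓ, (‖R.f2 x‖ ^ 2 + α * ‖R.f1dd x‖ ^ 2) :=
    intervalIntegral.integral_nonneg hℓ fun x _ => by positivity
  have htip : 0 ≤ m * ‖R.f41‖ ^ 2 + 2 * m * d * (R.f41 * conj R.f42).re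
      + (J + m * d ^ 2) * ‖R.f42‖ ^ 2 := by
    rw [tip_energy_eq]; positivity
  rw [normF, Real.sq_sqrt (by linarith)]
  linarith

end ResolventSol

theorem resolvent_boundary_energy_general (ℓ α m d J γ γs : ℝ)
    (hℓ : 0 < ℓ) (hα : 0 < α) (hm : 0 < m) (hd : 0 < d) (hJ : 0 < J)
    (hγ : 0 < γ) (hyp : d * γ ≤ 2 * γs) :
    ∃ c > 0, ∀ R : ResolventSol ℓ α m d J γ γs,
      ‖R.v 0‖ ^ 2 + α * ‖R.u2 0‖ ^ 2 ≤
        c * (1 + R.lam ^ 2) * normU R * normF R + c * (normF R) ^ 2 := by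
  obtain ⟨c, hc, hest⟩ := exists_boundary_estimate_of_tip_eq hα hm hd hJ hγ hyp
  refine ⟨c, hc, fun R => ?_⟩
  have hD := (R.dissipation_eq_pairing hℓ).trans_le
    (R.pairing_le_normU_mul_normF hℓ.le hα.le hm.le hJ.le)
  have hN := R.tip_energy_data_le_normF_sq hℓ.le hα.le hm.le hJ.le
  calc ‖R.v 0‖ ^ 2 + α * ‖R.u2 0‖ ^ 2
      ≤ c * ((1 + R.lam ^ 2) * (normU R * normF R) + normF R ^ 2) :=
        hest R.lam _ _ _ _ _ _ _ hD hN R.res4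
    _ = c * (1 + R.lam ^ 2) * normU R * normF R + c * (normF R) ^ 2 := by ring

/-- Boundary energy estimate for the resolvent system:
`|v(0)|² + α|u''(0)|² ≤ c (1 + λ²) ‖U‖ ‖F‖ + c ‖F‖²`. -/
theorem resolvent_boundary_energy (ℓ α m d J γ γs : ℝ)
    (hℓ : 0 < ℓ) (hα : 0 < α) (hm : 0 < m) (hd : 0 < d) (hJ : 0 < J)
    (hγ : 0 < γ) (hγs : 0 < γs) (hyp : d * γ ≤ 2 * γs) :
    ∃ c > 0, ∀ R : ResolventSol ℓ α m d J γ γs,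
      ‖R.v 0‖ ^ 2 + α * ‖R.u2 0‖ ^ 2 ≤
        c * (1 + R.lam ^ 2) * normU R * normF R + c * (normF R) ^ 2 :=
  resolvent_boundary_energy_general ℓ α m d J γ γs hℓ hα hm hd hJ hγ hyp
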